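/- arXiv:2605.05745 — 4 statements merged into one kernel-verified Lean document; each statement's English description precedes it below -/
import Mathlib

section
/- Let f : ℝ → ℝ satisfy f'' ≥ 0 and |f'''| ≤ M·f'' on ℝ for some M > 0. Then for all x, y ∈ ℝ, f(y) − f(x) − f'(x)(y − x) ≥ f''(x)·(y − x)²·(exp(−M|y−x|) + M|y−x| − 1)/(M|y−x|)² (interpreting the right side by its limit f''(x)(y−x)²/2 when y = x). -/
/-!
Write `g = f''`. The bound `|g'| ≤ M g` makes `g t · exp (M t)` nondecreasing and
`g t · exp (-M t)` nonincreasing, so `g` decays at most exponentially: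
`g (x + t s) ≥ g x · exp (-M t |s|)` for `t ≥ 0`. Along `t ↦ f (x + t s)` the second derivative
therefore dominates that of `f x + f' x s t + g x s² (exp (-u t) + u t - 1) / u²` with `u = M |s|`;
both functions agree to first order at `t = 0`, so they compare at `t = 1`.
-/

open Real Set

lemma nonneg_of_hasDerivAt_of_nonneg_Ici {h h' : ℝ → ℝ} (hd : ∀ t, HasDerivAt h (h' t) t)
    (h0 : 0 ≤ h 0) (hh' : ∀ t, 0 ≤ t → 0 ≤ h' t) {t : ℝ} (ht : 0 ≤ t) : 0 ≤ h t := by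
  have hmono : MonotoneOn h (Ici 0) :=
    monotoneOn_of_hasDerivWithinAt_nonneg (convex_Ici 0)
      (fun s _ ↦ (hd s).continuousAt.continuousWithinAt) (fun s _ ↦ (hd s).hasDerivWithinAt)
      (fun s hs ↦ hh' s (by rw [interior_Ici] at hs; exact hs.le))
  exact h0.trans (hmono self_mem_Ici ht ht)

lemma le_of_hasDerivAt_two_of_le_Ici {φ φ' φ'' ψ ψ' ψ'' : ℝ → ℝ}
    (hφ : ∀ t, HasDerivAt φ (φ' t) t) (hφ' : ∀ t, HasDerivAt φ' (φ'' t) t)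
    (hψ : ∀ t, HasDerivAt ψ (ψ' t) t) (hψ' : ∀ t, HasDerivAt ψ' (ψ'' t) t)
    (h0 : ψ 0 ≤ φ 0) (h0' : ψ' 0 ≤ φ' 0) (h'' : ∀ t, 0 ≤ t → ψ'' t ≤ φ'' t)
    {t : ℝ} (ht : 0 ≤ t) : ψ t ≤ φ t := by
  have hderiv : ∀ s, 0 ≤ s → 0 ≤ φ' s - ψ' s := fun s hs ↦
    nonneg_of_hasDerivAt_of_nonneg_Ici (fun r ↦ (hφ' r).sub (hψ' r)) (sub_nonneg.2 h0')
      (fun r hr ↦ sub_nonneg.2 (h'' r hr)) hs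
  exact sub_nonneg.1 <|
    nonneg_of_hasDerivAt_of_nonneg_Ici (fun r ↦ (hφ r).sub (hψ r)) (sub_nonneg.2 h0) hderiv ht

lemma mul_exp_neg_le_of_neg_le_deriv {g : ℝ → ℝ} {M : ℝ} (hg : Differentiable ℝ g)
    (h : ∀ t, -(M * g t) ≤ deriv g t) {a b : ℝ} (hab : a ≤ b) :
    g a * exp (-(M * (b - a))) ≤ g b := by
  have hd : ∀ t, HasDerivAt (fun t ↦ g t * exp (M * t))
      ((deriv g t + M * g t) * exp (M * t)) t := fun t ↦
    ((hg t).hasDerivAt.mul ((hasDerivAt_id' t).const_mul M).exp).congr_deriv (by ring)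
  have hmono : Monotone fun t ↦ g t * exp (M * t) :=
    monotone_of_deriv_nonneg (fun t ↦ (hd t).differentiableAt) fun t ↦ by
      rw [(hd t).deriv]
      exact mul_nonneg (by linarith [h t]) (exp_pos _).le
  have key : g a * exp (M * a) ≤ g b * exp (M * b) := hmono hab
  calc g a * exp (-(M * (b - a))) = g a * exp (M * a) / exp (M * b) := by
        rw [mul_div_assoc, ← exp_sub]; congr 2; ring
    _ ≤ g b := by rwa [div_le_iff₀ (exp_pos _)]

lemma mul_exp_neg_abs_le_of_abs_deriv_le {g : ℝ → ℝ} {M : ℝ} (hg : Differentiable ℝ g)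
    (h : ∀ t, |deriv g t| ≤ M * g t) (x z : ℝ) : g x * exp (-(M * |z - x|)) ≤ g z := by
  rcases le_total x z with hxz | hzx
  · rw [abs_of_nonneg (sub_nonneg.2 hxz)]
    exact mul_exp_neg_le_of_neg_le_deriv hg (fun t ↦ (abs_le.1 (h t)).1) hxz
  · have hrefl : ∀ t, -(M * g (-t)) ≤ deriv (fun t ↦ g (-t)) t := fun t ↦ by
      rw [deriv_comp_neg]
      linarith [(abs_le.1 (h (-t))).2]
    have := mul_exp_neg_le_of_neg_le_deriv (g := fun t ↦ g (-t)) (hg.comp differentiable_neg)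
      hrefl (neg_le_neg hzx)
    rw [abs_of_nonpos (sub_nonpos.2 hzx)]
    simpa [neg_neg, sub_eq_add_neg, add_comm] using this

lemma hasDerivAt_comp_add_mul {F F' : ℝ → ℝ} (hF : ∀ z, HasDerivAt F (F' z) z) (x s t : ℝ) :
    HasDerivAt (fun t ↦ F (x + t * s)) (F' (x + t * s) * s) t :=
  (hF _).comp t ((((hasDerivAt_id' t).mul_const s).const_add x).congr_deriv (one_mul s))

lemma hasDerivAt_exp_neg_mul_add_mul_sub_one (u t : ℝ) :
    HasDerivAt (fun t ↦ exp (-(u * t)) + u * t - 1) (u - u * exp (-(u * t))) t :=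
  ((((hasDerivAt_id' t).const_mul u).fun_neg.exp.add ((hasDerivAt_id' t).const_mul u)).sub_const
    1).congr_deriv (by ring)

lemma hasDerivAt_sub_mul_exp_neg_mul (u t : ℝ) :
    HasDerivAt (fun t ↦ u - u * exp (-(u * t))) (u ^ 2 * exp (-(u * t))) t :=
  ((((hasDerivAt_id' t).const_mul u).fun_neg.exp.const_mul u).const_sub u).congr_deriv (by ring)

lemma taylor_le_of_mul_exp_neg_le_second_deriv {φ φ' φ'' : ℝ → ℝ}
    (hφ : ∀ t, HasDerivAt φ (φ' t) t) (hφ' : ∀ t, HasDerivAt φ' (φ'' t) t) {a u : ℝ}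
    (hu : u ≠ 0) (h : ∀ t, 0 ≤ t → a * exp (-(u * t)) ≤ φ'' t) :
    φ 0 + φ' 0 + a * ((exp (-u) + u - 1) / u ^ 2) ≤ φ 1 := by
  have key := le_of_hasDerivAt_two_of_le_Ici hφ hφ' (t := 1)
    (ψ := fun t ↦ φ 0 + φ' 0 * t + a / u ^ 2 * (exp (-(u * t)) + u * t - 1))
    (ψ' := fun t ↦ φ' 0 + a / u ^ 2 * (u - u * exp (-(u * t))))
    (ψ'' := fun t ↦ a / u ^ 2 * (u ^ 2 * exp (-(u * t))))
    (fun t ↦ (((hasDerivAt_id' t).const_mul _).const_add _ |>.add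
      ((hasDerivAt_exp_neg_mul_add_mul_sub_one u t).const_mul _)).congr_deriv (by ring))
    (fun t ↦ ((hasDerivAt_sub_mul_exp_neg_mul u t).const_mul _).const_add _)
    (by simp) (by simp)
    (fun t ht ↦ by
      rw [div_mul_eq_mul_div, mul_div_assoc, mul_div_cancel_left₀ _ (pow_ne_zero 2 hu)]
      exact h t ht)
    zero_le_one
  simp only [mul_one] at key
  convert key using 2
  ring

theorem stmt_1_general (f : ℝ → ℝ) (hf : ContDiff ℝ 3 f) (M : ℝ) (hM : 0 < M)
    (hf''' : ∀ x, |deriv (deriv (deriv f)) x| ≤ M * deriv (deriv f) x) :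
    ∀ x y : ℝ,
      f y - f x - deriv f x * (y - x) ≥
        deriv (deriv f) x * (y - x) ^ 2 *
          (if y = x then 1 / 2
           else (Real.exp (-(M * |y - x|)) + M * |y - x| - 1) / (M * |y - x|) ^ 2) := by
  have hd1 : Differentiable ℝ f := hf.differentiable (by norm_num)
  have hd2 : Differentiable ℝ (deriv f) := by
    simpa [iteratedDeriv_eq_iterate] using hf.differentiable_iteratedDeriv 1 (by norm_num)
  have hd3 : Differentiable ℝ (deriv (deriv f)) := by
    simpa [iteratedDeriv_eq_iterate] using hf.differentiable_iteratedDeriv 2 (by norm_num)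
  intro x y
  split_ifs with hxy
  · simp [hxy]
  set s := y - x
  have hu : M * |s| ≠ 0 := (mul_pos hM (abs_pos.2 (sub_ne_zero.2 hxy))).ne'
  have hdecay : ∀ t, 0 ≤ t →
      deriv (deriv f) x * exp (-(M * |s| * t)) ≤ deriv (deriv f) (x + t * s) := fun t ht ↦ by
    have := mul_exp_neg_abs_le_of_abs_deriv_le hd3 hf''' x (x + t * s)
    rwa [add_sub_cancel_left, abs_mul, abs_of_nonneg ht, mul_comm t, ← mul_assoc] at this
  have key := taylor_le_of_mul_exp_neg_le_second_deriv (a := deriv (deriv f) x * s ^ 2)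
    (hasDerivAt_comp_add_mul (fun z ↦ (hd1 z).hasDerivAt) x s)
    (fun t ↦ (hasDerivAt_comp_add_mul (fun z ↦ (hd2 z).hasDerivAt) x s t).mul_const s) hu
    (fun t ht ↦ by nlinarith [hdecay t ht, mul_self_nonneg s])
  rw [zero_mul, add_zero, one_mul, show x + s = y by simp [s]] at key
  linarith

theorem stmt_1 (f : ℝ → ℝ) (hf : ContDiff ℝ 3 f) (M : ℝ) (hM : 0 < M)
    (hf'' : ∀ x, 0 ≤ deriv (deriv f) x)
    (hf''' : ∀ x, |deriv (deriv (deriv f)) x| ≤ M * deriv (deriv f) x) :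
    ∀ x y : ℝ,
      f y - f x - deriv f x * (y - x) ≥
        deriv (deriv f) x * (y - x) ^ 2 *
          (if y = x then 1 / 2
           else (Real.exp (-(M * |y - x|)) + M * |y - x| - 1) / (M * |y - x|) ^ 2) :=
  stmt_1_general f hf M hM hf'''
end

section
/- For u > 0, the function g(u) = (exp(−u) + u − 1)/u² satisfies g(u) ≥ 1/(2(1 + u)). -/
lemma taylor_exp_neg {u : ℝ} (hu : 0 ≤ u) (hu1 : u ≤ 1) :
    1 - u + u ^ 2 / 2 - u ^ 3 / 6 - 5 * u ^ 4 / 96 ≤ Real.exp (-u) := by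
  have hx : |(-u)| ≤ 1 := by rw [abs_neg, abs_of_nonneg hu]; exact hu1
  have h := Real.exp_bound hx (n := 4) (by norm_num)
  have hs : ∑ m ∈ Finset.range 4, (-u) ^ m / (m.factorial : ℝ)
      = 1 - u + u ^ 2 / 2 - u ^ 3 / 6 := by
    simp [Finset.sum_range_succ, Nat.factorial]
    ring
  rw [hs] at h
  have habs : |(-u)| ^ 4 * ((4 : ℕ).succ / ((4 : ℕ).factorial * (4 : ℕ)) : ℝ)
      = 5 * u ^ 4 / 96 := by
    rw [abs_neg, abs_of_nonneg hu]
    norm_num [Nat.factorial]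
    ring
  rw [habs] at h
  have := (abs_sub_le_iff.1 h).2
  linarith

theorem stmt_2 : ∀ u : ℝ, 0 < u →
    (Real.exp (-u) + u - 1) / u ^ 2 ≥ 1 / (2 * (1 + u)) := by
  intro u hu
  rw [ge_iff_le, div_le_div_iff₀ (by positivity) (by positivity)]
  rcases le_or_gt u 1 with h1 | h1
  · have ht := taylor_exp_neg hu.le h1
    have key : 0 ≤ u ^ 3 * (32 - 21 * u - 5 * u ^ 2) :=
      mul_nonneg (pow_nonneg hu.le 3) (by nlinarith)
    have := mul_le_mul_of_nonneg_left ht (by linarith : (0:ℝ) ≤ 2 * (1 + u))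
    nlinarith
  rcases le_or_gt u 2 with h2 | h2
  · have hk : (1 : ℝ) - u / 2 ≤ Real.exp (-(u / 2)) := by
      have := Real.add_one_le_exp (-(u / 2)); linarith
    have hsq : Real.exp (-u) = Real.exp (-(u / 2)) ^ 2 := by
      rw [sq, ← Real.exp_add]; ring_nf
    have hpos : (0 : ℝ) ≤ 1 - u / 2 := by linarith
    have : (1 - u / 2) ^ 2 ≤ Real.exp (-u) := by
      rw [hsq]
      exact pow_le_pow_left₀ hpos hk 2
    nlinarith
  · have : (0 : ℝ) < Real.exp (-u) := Real.exp_pos _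
    nlinarith
end

section
/- Suppose w is a probability vector on a finite action set A, t ∈ ℕ, and A_t = Σ_{a} N_a(t) c_a x_a x_aᵀ where N_a(t) are nonnegative integers with Σ_a N_a(t) = t and |N_a(t) − t·w_a| ≤ ε for all a, with c_a > 0 and x_a ∈ ℝ^d, ‖x_a‖ ≤ 2, c_a ≤ C. Then for every v, vᵀA_t⁻¹ v ≤ vᵀ(t·A(w) − 4·C·ε·|A|·I)⁻¹ v whenever t·A(w) − 4·C·ε·|A|·I is positive definite, where A(w) = Σ_a w_a c_a x_a x_aᵀ. -/
/-!
Each coefficient `N_a c_a` of `A_t` differs from the matching coefficient `t w_a c_a` of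
`t • A(w)` by at most `ε C`, and `x_a x_aᵀ ≤ ‖x_a‖² I ≤ 4 I` by Cauchy–Schwarz, so in the Loewner
order `t • A(w) - 4 C ε |A| I ≤ A_t`. Inversion reverses the Loewner order on positive definite
matrices: with `u = A⁻¹ v` and `y = B⁻¹ v`, expanding `0 ≤ (u - y)ᵀ B (u - y)` and using
`uᵀ B u ≤ uᵀ A u = vᵀ u` gives `vᵀ u ≤ vᵀ y`.
-/

open Matrix

open scoped MatrixOrder

namespace Matrix

variable {n ι : Type*} [Fintype n] [Fintype ι]

lemma dotProduct_self_nonneg (v : n → ℝ) : 0 ≤ v ⬝ᵥ v := by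
  simpa using dotProduct_star_self_nonneg v

lemma sq_dotProduct_le_dotProduct_self_mul (x v : n → ℝ) :
    (x ⬝ᵥ v) ^ 2 ≤ (x ⬝ᵥ x) * (v ⬝ᵥ v) := by
  simpa only [dotProduct, sq] using Finset.sum_mul_sq_le_sq_mul_sq Finset.univ x v

lemma dotProduct_sum_smul_vecMulVec_mulVec {R : Type*} [CommSemiring R] (r : ι → R)
    (x : ι → n → R) (v : n → R) :
    v ⬝ᵥ (∑ a, r a • vecMulVec (x a) (x a)) *ᵥ v = ∑ a, r a * (x a ⬝ᵥ v) ^ 2 := by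
  rw [sum_mulVec, dotProduct_sum]
  refine Finset.sum_congr rfl fun a _ => ?_
  rw [smul_mulVec, vecMulVec_mulVec, op_smul_eq_smul, dotProduct_smul, dotProduct_smul,
    dotProduct_comm v, smul_eq_mul, smul_eq_mul, sq]

omit [Fintype n] in
lemma isHermitian_sum_smul_vecMulVec {R : Type*} [CommSemiring R] [StarRing R] [TrivialStar R]
    (r : ι → R) (x : ι → n → R) : (∑ a, r a • vecMulVec (x a) (x a)).IsHermitian := by
  ext i j
  simp [Matrix.sum_apply, vecMulVec_apply, mul_comm]

lemma sub_mul_mul_sq_dotProduct_le {ρ C ε τ m c : ℝ} {x : n → ℝ} (hx : x ⬝ᵥ x ≤ ρ)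
    (hc : 0 ≤ c) (hC : c ≤ C) (hm : |m - τ| ≤ ε) (v : n → ℝ) :
    (τ - m) * c * (x ⬝ᵥ v) ^ 2 ≤ ρ * C * ε * (v ⬝ᵥ v) := by
  have hε : 0 ≤ ε := (abs_nonneg _).trans hm
  have hτm : τ - m ≤ ε := (abs_sub_comm m τ ▸ le_abs_self (τ - m)).trans hm
  calc (τ - m) * c * (x ⬝ᵥ v) ^ 2
      ≤ ε * c * ((x ⬝ᵥ x) * (v ⬝ᵥ v)) := by
        gcongr
        exact sq_dotProduct_le_dotProduct_self_mul x v
    _ ≤ ε * C * (ρ * (v ⬝ᵥ v)) := by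
        gcongr
        exacts [mul_nonneg (dotProduct_self_nonneg x) (dotProduct_self_nonneg v),
          mul_nonneg hε (hc.trans hC), dotProduct_self_nonneg v]
    _ = ρ * C * ε * (v ⬝ᵥ v) := by ring

variable [DecidableEq n]

lemma sum_smul_vecMulVec_sub_le_of_abs_sub_le {ρ C ε : ℝ} (τ m c : ι → ℝ) (x : ι → n → ℝ)
    (hx : ∀ a, x a ⬝ᵥ x a ≤ ρ) (hc : ∀ a, 0 ≤ c a) (hC : ∀ a, c a ≤ C)
    (hm : ∀ a, |m a - τ a| ≤ ε) :
    ∑ a, (τ a * c a) • vecMulVec (x a) (x a) - (ρ * C * ε * Fintype.card ι) • (1 : Matrix n n ℝ)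
      ≤ ∑ a, (m a * c a) • vecMulVec (x a) (x a) := by
  rw [le_iff]
  refine PosSemidef.of_dotProduct_mulVec_nonneg ((isHermitian_sum_smul_vecMulVec _ x).sub
    ((isHermitian_sum_smul_vecMulVec _ x).sub (isHermitian_one.smul (.all _)))) fun v => ?_
  have hsum := Finset.sum_le_sum fun a (_ : a ∈ Finset.univ) =>
    sub_mul_mul_sq_dotProduct_le (hx a) (hc a) (hC a) (hm a) v
  simp only [sub_mul, Finset.sum_sub_distrib, Finset.sum_const, Finset.card_univ,
    nsmul_eq_mul] at hsum
  simp only [star_trivial, sub_mulVec, dotProduct_sub, dotProduct_sum_smul_vecMulVec_mulVec,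
    smul_mulVec, one_mulVec, dotProduct_smul, smul_eq_mul]
  linarith

lemma dotProduct_inv_mulVec_le_of_le {A B : Matrix n n ℝ} (hB : B.PosDef) (hBA : B ≤ A)
    (v : n → ℝ) : v ⬝ᵥ A⁻¹ *ᵥ v ≤ v ⬝ᵥ B⁻¹ *ᵥ v := by
  have hA : A.PosDef := by simpa using hB.add_posSemidef hBA
  set u := A⁻¹ *ᵥ v
  set y := B⁻¹ *ᵥ v
  have hAu : A *ᵥ u = v := by
    rw [mulVec_mulVec, mul_nonsing_inv A ((isUnit_iff_isUnit_det A).mp hA.isUnit), one_mulVec]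
  have hBy : B *ᵥ y = v := by
    rw [mulVec_mulVec, mul_nonsing_inv B ((isUnit_iff_isUnit_det B).mp hB.isUnit), one_mulVec]
  have hBsymm : y ⬝ᵥ B *ᵥ u = u ⬝ᵥ v := by
    rw [dotProduct_mulVec, ← mulVec_transpose, ← conjTranspose_eq_transpose_of_trivial,
      hB.isHermitian.eq, hBy, dotProduct_comm]
  have hgap : 0 ≤ u ⬝ᵥ (A - B) *ᵥ u := by simpa using hBA.dotProduct_mulVec_nonneg u
  have hdiff : 0 ≤ (u - y) ⬝ᵥ B *ᵥ (u - y) := by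
    simpa using hB.posSemidef.dotProduct_mulVec_nonneg (u - y)
  simp only [sub_mulVec, mulVec_sub, dotProduct_sub, sub_dotProduct, hAu, hBy, hBsymm] at hgap hdiff
  rw [dotProduct_comm v u, dotProduct_comm v y]
  linarith

end Matrix

theorem stmt_11_general {d : ℕ} {ι : Type*} [Fintype ι]
    (w : ι → ℝ)
    (t : ℕ) (N : ι → ℕ)
    (ε : ℝ) (htrack : ∀ a, |(N a : ℝ) - (t : ℝ) * w a| ≤ ε)
    (c : ι → ℝ) (C : ℝ) (hc : ∀ a, 0 < c a) (hC : ∀ a, c a ≤ C)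
    (x : ι → Fin d → ℝ) (hx : ∀ a, x a ⬝ᵥ x a ≤ 4)
    (At Aw : Matrix (Fin d) (Fin d) ℝ)
    (hAt : At = ∑ a : ι, ((N a : ℝ) * c a) • Matrix.vecMulVec (x a) (x a))
    (hAw : Aw = ∑ a : ι, (w a * c a) • Matrix.vecMulVec (x a) (x a))
    (hpos : ((t : ℝ) • Aw - (4 * C * ε * (Fintype.card ι : ℝ)) • (1 : Matrix (Fin d) (Fin d) ℝ)).PosDef) :
    ∀ v : Fin d → ℝ,
      v ⬝ᵥ At⁻¹.mulVec v ≤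
        v ⬝ᵥ ((t : ℝ) • Aw - (4 * C * ε * (Fintype.card ι : ℝ)) • (1 : Matrix (Fin d) (Fin d) ℝ))⁻¹.mulVec v := by
  have hle : (t : ℝ) • Aw - (4 * C * ε * (Fintype.card ι : ℝ)) • (1 : Matrix (Fin d) (Fin d) ℝ)
      ≤ At := by
    rw [hAt, hAw, Finset.smul_sum]
    simp_rw [smul_smul, ← mul_assoc]
    exact sum_smul_vecMulVec_sub_le_of_abs_sub_le (fun a => t * w a) (fun a => N a) c x hx
      (fun a => (hc a).le) hC htrack
  exact dotProduct_inv_mulVec_le_of_le hpos hle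

theorem stmt_11 {d : ℕ} {ι : Type*} [Fintype ι]
    (w : ι → ℝ) (hw0 : ∀ a, 0 ≤ w a) (hw1 : ∑ a, w a = 1)
    (t : ℕ) (N : ι → ℕ) (hN : ∑ a, N a = t)
    (ε : ℝ) (hε : 0 ≤ ε) (htrack : ∀ a, |(N a : ℝ) - (t : ℝ) * w a| ≤ ε)
    (c : ι → ℝ) (C : ℝ) (hc : ∀ a, 0 < c a) (hC : ∀ a, c a ≤ C)
    (x : ι → Fin d → ℝ) (hx : ∀ a, x a ⬝ᵥ x a ≤ 4)
    (At Aw : Matrix (Fin d) (Fin d) ℝ)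
    (hAt : At = ∑ a : ι, ((N a : ℝ) * c a) • Matrix.vecMulVec (x a) (x a))
    (hAw : Aw = ∑ a : ι, (w a * c a) • Matrix.vecMulVec (x a) (x a))
    (hpos : ((t : ℝ) • Aw - (4 * C * ε * (Fintype.card ι : ℝ)) • (1 : Matrix (Fin d) (Fin d) ℝ)).PosDef) :
    ∀ v : Fin d → ℝ,
      v ⬝ᵥ At⁻¹.mulVec v ≤
        v ⬝ᵥ ((t : ℝ) • Aw - (4 * C * ε * (Fintype.card ι : ℝ)) • (1 : Matrix (Fin d) (Fin d) ℝ))⁻¹.mulVec v :=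
  stmt_11_general w t N ε htrack c C hc hC x hx At Aw hAt hAw hpos
end

section
/- Define the tracking rule over a finite action set A: at each round t, choose a_t ∈ argmin_{a} (N_a(t−1) − W_a(t−1)) where N_a(t) is the number of pulls of action a up to round t and W_a(t) = Σ_{s≤t} w_a(s) for probability vectors w(s) on A. Then for all t ≥ 1 and all a ∈ A, N_a(t) ≥ W_a(t) − |A| + 1 and N_a(t) ≤ W_a(t) + 1. -/
open Finset

theorem stmt_12 {ι : Type*} [Fintype ι] [DecidableEq ι]
    (w : ℕ → ι → ℝ) (hw0 : ∀ s a, 0 ≤ w s a) (hw1 : ∀ s, ∑ a, w s a = 1)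
    (act : ℕ → ι)
    (N : ι → ℕ → ℕ) (hN : ∀ a t, N a t = ((Finset.range t).filter (fun s => act s = a)).card)
    (W : ι → ℕ → ℝ) (hW : ∀ a t, W a t = ∑ s ∈ Finset.range t, w s a)
    (hrule : ∀ t : ℕ, ∀ b : ι, (N (act t) t : ℝ) - W (act t) t ≤ (N b t : ℝ) - W b t) :
    ∀ t : ℕ, 1 ≤ t → ∀ a : ι,
      W a t - (Fintype.card ι : ℝ) + 1 ≤ (N a t : ℝ) ∧ (N a t : ℝ) ≤ W a t + 1 := by
  have card_pos : (0 : ℝ) < Fintype.card ι := by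
    exact_mod_cast Fintype.card_pos_iff.mpr ⟨act 0⟩
  have sumN : ∀ t, ∑ b, ((N b t : ℝ)) = (t : ℝ) := by
    intro t
    have h : ∑ b, N b t = t := by
      simp only [hN]
      rw [← Finset.card_eq_sum_card_fiberwise (fun x _ => Finset.mem_univ (act x))]
      simp
    exact_mod_cast h
  have sumW : ∀ t, ∑ b, W b t = (t : ℝ) := by
    intro t
    simp only [hW]
    rw [Finset.sum_comm]
    simp [hw1]
  have hsum0 : ∀ t, ∑ b, ((N b t : ℝ) - W b t) = 0 := by
    intro t
    rw [Finset.sum_sub_distrib, sumN, sumW]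
    ring
  have hmin : ∀ t, (N (act t) t : ℝ) - W (act t) t ≤ 0 := by
    intro t
    by_contra hc
    push_neg at hc
    have hlt : (0:ℝ) < ∑ b, ((N b t : ℝ) - W b t) := by
      have : ∀ b ∈ Finset.univ, (0:ℝ) < (N b t : ℝ) - W b t :=
        fun b _ => lt_of_lt_of_le hc (hrule t b)
      exact Finset.sum_pos this ⟨act t, Finset.mem_univ _⟩
    rw [hsum0 t] at hlt
    exact lt_irrefl _ hlt
  have hNsucc : ∀ t a, N a (t+1) = N a t + (if act t = a then 1 else 0) := by
    intro t a
    simp only [hN, Finset.range_add_one, Finset.filter_insert]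
    by_cases h : act t = a
    · rw [if_pos h, if_pos h, Finset.card_insert_of_notMem (by simp)]
    · simp [h]
  have hWsucc : ∀ t a, W a (t+1) = W a t + w t a := by
    intro t a
    simp [hW, Finset.sum_range_succ]
  have ub : ∀ t a, (N a t : ℝ) ≤ W a t + 1 := by
    intro t
    induction t with
    | zero => intro a; simp [hN, hW]
    | succ t ih =>
      intro a
      rw [hNsucc, hWsucc]
      by_cases h : act t = a
      · have := hmin t
        rw [h] at this
        push_cast
        rw [if_pos h]
        linarith [hw0 t a]
      · push_cast [h]
        have := ih a
        have := hw0 t a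
        linarith
  intro t _ a
  refine ⟨?_, ub t a⟩
  have key : (N a t : ℝ) - W a t = -∑ b ∈ Finset.univ.erase a, ((N b t : ℝ) - W b t) := by
    have := hsum0 t
    rw [← Finset.add_sum_erase Finset.univ _ (Finset.mem_univ a)] at this
    linarith
  have hbound : ∑ b ∈ Finset.univ.erase a, ((N b t : ℝ) - W b t) ≤
      ((Fintype.card ι : ℝ) - 1) := by
    calc ∑ b ∈ Finset.univ.erase a, ((N b t : ℝ) - W b t)
        ≤ ∑ _b ∈ Finset.univ.erase a, (1:ℝ) :=
          Finset.sum_le_sum (fun b _ => by linarith [ub t b])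
      _ = ((Fintype.card ι : ℝ) - 1) := by
          have h1 : 1 ≤ Fintype.card ι := Fintype.card_pos_iff.mpr ⟨a⟩
          rw [Finset.sum_const, Finset.card_erase_of_mem (Finset.mem_univ a),
            nsmul_eq_mul, Nat.cast_sub (by simpa using h1), Finset.card_univ]
          ring
  linarith [key, hbound]
end
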